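/- arXiv:1805.05678 — 3 statements merged into one kernel-verified Lean document; each statement's English description precedes it below -/
import Mathlib

section
/- Let k be a field and σ the k-automorphism of the rational function field k(x₁,…,x_{n-1}) determined by σ(x₁) = x₂, σ(x₂) = x₃, …, σ(x_{n-2}) = x_{n-1}, σ(x_{n-1}) = 1/(x₁x₂⋯x_{n-1}). Then there exist y₁,…,y_{n-1} ∈ k(x₁,…,x_{n-1}) such that k(x₁,…,x_{n-1}) = k(y₁,…,y_{n-1}) and σ(y₁) = y₂, …, σ(y_{n-2}) = y_{n-1}, σ(y_{n-1}) = 1 − (y₁ + ⋯ + y_{n-1}). -/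
/-!
Index the variables from `0`, write `m = n - 1`, and put `w_i = x₀x₁⋯x_{i-1}` for `0 ≤ i ≤ m`
(so `w₀ = 1`). Then `σ` permutes the `w_i` cyclically up to the common factor `1/x₀`:
`σ(w_i) = w_{i+1}/x₀`, with `w_{m+1}` read as `w₀`. Hence `S = w₀ + ⋯ + w_m` satisfies
`σ(S) = S/x₀`, and the quotients `w₁/S, …, w_m/S` are shifted by `σ`, the last one to
`w₀/S = 1 - (w₁ + ⋯ + w_m)/S`. Conversely `1/S` lies in the field they generate, hence so do `S`,
every `w_i`, and every `x_i = w_{i+1}/w_i`.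
-/

open MvPolynomial

lemma Fin.partialProd_last {M : Type*} [CommMonoid M] {m : ℕ} (x : Fin m → M) :
    Fin.partialProd x (Fin.last m) = ∏ i, x i := by
  rw [Fin.partialProd, Fin.val_last, List.take_of_length_le (List.length_ofFn).le, List.prod_ofFn]

lemma map_partialProd {M N G : Type*} [Monoid M] [Monoid N] [FunLike G M N]
    [MonoidHomClass G M N] (f : G) {m : ℕ} (x : Fin m → M) (i : Fin (m + 1)) :
    f (Fin.partialProd x i) = Fin.partialProd (f ∘ x) i := by
  rw [Fin.partialProd, Fin.partialProd, map_list_prod, List.map_take, List.map_ofFn]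

section PartialProdSum

variable {R : Type*} [CommSemiring R] {m : ℕ}

def partialProdSum (x : Fin m → R) : R := ∑ i, Fin.partialProd x i

lemma map_partialProdSum {S G : Type*} [CommSemiring S] [FunLike G R S] [RingHomClass G R S]
    (f : G) (x : Fin m → R) : f (partialProdSum x) = partialProdSum (f ∘ x) := by
  simp only [partialProdSum, map_sum, map_partialProd]

lemma partialProdSum_zero : partialProdSum (0 : Fin m → R) = 1 := by
  simp [partialProdSum, Fin.sum_univ_succ, Fin.partialProd_succ]

lemma partialProdSum_X_ne_zero [Nontrivial R] :
    partialProdSum (X : Fin m → MvPolynomial (Fin m) R) ≠ 0 := by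
  intro h
  have h₁ := congrArg constantCoeff h
  rw [map_partialProdSum, show constantCoeff ∘ X = 0 from funext (constantCoeff_X R),
    partialProdSum_zero, map_zero] at h₁
  exact one_ne_zero h₁

end PartialProdSum

lemma adjoin_range_algebraMap_X_eq_top (k ι : Type*) [Field k] :
    IntermediateField.adjoin k (Set.range
      (algebraMap (MvPolynomial ι k) (FractionRing (MvPolynomial ι k)) ∘ X)) = ⊤ := by
  rw [← IsFractionRing.algHom_fieldRange_eq_of_comp_eq_of_range_eq (f := AlgHom.id k _)
    (g := IsScalarTower.toAlgHom k (MvPolynomial ι k) _) rfl]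
  · exact AlgHom.fieldRange_eq_top.mpr Function.surjective_id
  · rw [← Algebra.map_top, ← adjoin_range_X, AlgHom.map_adjoin, ← Set.range_comp]
    rfl

section HajjaBasis

variable {K : Type*} [Field K] {m : ℕ}

def hajjaBasis (x : Fin m → K) (i : Fin m) : K := Fin.partialProd x i.succ / partialProdSum x

lemma partialProd_ne_zero {x : Fin m → K} (hx : ∀ i, x i ≠ 0) (i : Fin (m + 1)) :
    Fin.partialProd x i ≠ 0 := by
  induction i using Fin.induction with
  | zero => simp
  | succ i ih => rw [Fin.partialProd_succ]; exact mul_ne_zero ih (hx i)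

lemma one_sub_sum_hajjaBasis {x : Fin m → K} (hS : partialProdSum x ≠ 0) :
    1 - ∑ i, hajjaBasis x i = (partialProdSum x)⁻¹ := by
  have hsum : ∑ i : Fin m, Fin.partialProd x i.succ = partialProdSum x - 1 := by
    rw [partialProdSum, Fin.sum_univ_succ, Fin.partialProd_zero]; ring
  simp only [hajjaBasis, ← Finset.sum_div, hsum]
  field_simp
  ring

lemma adjoin_range_hajjaBasis (k : Type*) [Field k] [Algebra k K] {x : Fin m → K}
    (hx : ∀ i, x i ≠ 0) (hS : partialProdSum x ≠ 0) :
    IntermediateField.adjoin k (Set.range (hajjaBasis x)) =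
      IntermediateField.adjoin k (Set.range x) := by
  apply le_antisymm <;> rw [IntermediateField.adjoin_le_iff, Set.range_subset_iff]
  · set E := IntermediateField.adjoin k (Set.range x)
    have hw (i : Fin (m + 1)) : Fin.partialProd x i ∈ E := by
      induction i using Fin.induction with
      | zero => rw [Fin.partialProd_zero]; exact E.one_mem
      | succ i ih =>
        rw [Fin.partialProd_succ]
        exact E.mul_mem ih (IntermediateField.subset_adjoin _ _ ⟨i, rfl⟩)
    exact fun i => E.div_mem (hw _) (E.sum_mem fun j _ => hw j)
  · set E := IntermediateField.adjoin k (Set.range (hajjaBasis x))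
    have hS_inv : (partialProdSum x)⁻¹ ∈ E := by
      rw [← one_sub_sum_hajjaBasis hS]
      exact E.sub_mem E.one_mem
        (E.sum_mem fun j _ => IntermediateField.subset_adjoin _ _ ⟨j, rfl⟩)
    have hw (i : Fin (m + 1)) : Fin.partialProd x i ∈ E := by
      refine Fin.cases (by rw [Fin.partialProd_zero]; exact E.one_mem) (fun i => ?_) i
      rw [← div_mul_cancel₀ (Fin.partialProd x i.succ) hS]
      exact E.mul_mem (IntermediateField.subset_adjoin _ _ ⟨i, rfl⟩)
        (inv_inv (partialProdSum x) ▸ E.inv_mem hS_inv)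
    intro i
    rw [← mul_div_cancel_left₀ (x i) (partialProd_ne_zero hx i.castSucc),
      ← Fin.partialProd_succ]
    exact E.div_mem (hw _) (hw _)

structure IsHajjaShift {F : Type*} [FunLike F K K] (σ : F) (x : Fin m → K) : Prop where
  map_of_val_eq_succ : ∀ i j : Fin m, (j : ℕ) = i + 1 → σ (x i) = x j
  map_of_val_eq_last : ∀ i : Fin m, (i : ℕ) = m - 1 → σ (x i) = (∏ j, x j)⁻¹

namespace IsHajjaShift

variable {F : Type*} [FunLike F K K] [RingHomClass F K K] {σ : F} {x : Fin m → K} [NeZero m]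

lemma map_partialProd_mul_of_lt (h : IsHajjaShift σ x) {k : ℕ} (hk : k < m) :
    σ (Fin.partialProd x ⟨k, by omega⟩) * x 0 = Fin.partialProd x ⟨k + 1, by omega⟩ := by
  induction k with
  | zero =>
    rw [show (⟨1, _⟩ : Fin (m + 1)) = (0 : Fin m).succ from rfl, Fin.partialProd_succ]
    simp
  | succ k ih =>
    rw [show (⟨k + 1, _⟩ : Fin (m + 1)) = (⟨k, by omega⟩ : Fin m).succ from rfl,
      show (⟨k + 1 + 1, _⟩ : Fin (m + 1)) = (⟨k + 1, hk⟩ : Fin m).succ from rfl,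
      Fin.partialProd_succ, Fin.partialProd_succ, map_mul, mul_right_comm]
    simp only [Fin.castSucc_mk]
    rw [ih (by omega), h.map_of_val_eq_succ ⟨k, by omega⟩ ⟨k + 1, hk⟩ rfl]

lemma map_partialProd_last_mul (h : IsHajjaShift σ x) (hx : ∀ i, x i ≠ 0) :
    σ (Fin.partialProd x (Fin.last m)) * x 0 = 1 := by
  obtain ⟨l, rfl⟩ : ∃ l, m = l + 1 := ⟨m - 1, (Nat.sub_one_add_one (NeZero.ne m)).symm⟩
  rw [← Fin.succ_last, Fin.partialProd_succ, map_mul, mul_right_comm,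
    show (Fin.last l).castSucc = ⟨l, by omega⟩ from rfl, h.map_partialProd_mul_of_lt (by omega),
    h.map_of_val_eq_last _ rfl, show (⟨l + 1, _⟩ : Fin (l + 2)) = Fin.last (l + 1) from rfl,
    Fin.partialProd_last]
  exact mul_inv_cancel₀ (Finset.prod_ne_zero_iff.mpr fun i _ => hx i)

lemma map_partialProd_mul (h : IsHajjaShift σ x) (hx : ∀ i, x i ≠ 0) (i : Fin (m + 1)) :
    σ (Fin.partialProd x i) * x 0 = Fin.partialProd x (i + 1) := by
  rcases Fin.eq_castSucc_or_eq_last i with ⟨j, rfl⟩ | rfl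
  · rw [Fin.coeSucc_eq_succ]
    exact h.map_partialProd_mul_of_lt j.isLt
  · rw [h.map_partialProd_last_mul hx, Fin.last_add_one, Fin.partialProd_zero]

lemma map_partialProdSum_mul (h : IsHajjaShift σ x) (hx : ∀ i, x i ≠ 0) :
    σ (partialProdSum x) * x 0 = partialProdSum x := by
  rw [partialProdSum, map_sum, Finset.sum_mul]
  simp only [h.map_partialProd_mul hx]
  exact Equiv.sum_comp (Equiv.addRight (1 : Fin (m + 1))) (Fin.partialProd x)

lemma map_hajjaBasis (h : IsHajjaShift σ x) (hx : ∀ i, x i ≠ 0) (i : Fin m) :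
    σ (hajjaBasis x i) = Fin.partialProd x (i.succ + 1) / partialProdSum x := by
  rw [hajjaBasis, map_div₀, ← mul_div_mul_right _ _ (hx 0), h.map_partialProd_mul hx,
    h.map_partialProdSum_mul hx]

lemma map_hajjaBasis_of_val_eq_succ (h : IsHajjaShift σ x) (hx : ∀ i, x i ≠ 0) {i j : Fin m}
    (hij : (j : ℕ) = i + 1) : σ (hajjaBasis x i) = hajjaBasis x j := by
  rw [h.map_hajjaBasis hx, hajjaBasis]
  congr 2
  ext
  rw [Fin.val_add_one_of_lt] <;> simp [Fin.lt_def] <;> omega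

lemma map_hajjaBasis_of_val_eq_last (h : IsHajjaShift σ x) (hx : ∀ i, x i ≠ 0)
    (hS : partialProdSum x ≠ 0) {i : Fin m} (hi : (i : ℕ) = m - 1) :
    σ (hajjaBasis x i) = 1 - ∑ j, hajjaBasis x j := by
  rw [h.map_hajjaBasis hx, one_sub_sum_hajjaBasis hS,
    show i.succ = Fin.last m by ext; simp; omega, Fin.last_add_one, Fin.partialProd_zero, one_div]

end IsHajjaShift

end HajjaBasis

/-- Hajja's Lemma: if `σ` is the `k`-automorphism of
`k(x₁,…,x_{n-1})` with `σ(x_i) = x_{i+1}` for `i < n-1` and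
`σ(x_{n-1}) = 1/(x₁⋯x_{n-1})`, then there is a new transcendence basis
`y₁,…,y_{n-1}` generating the same field on which `σ` acts by
`y_i ↦ y_{i+1}`, `y_{n-1} ↦ 1 - (y₁ + ⋯ + y_{n-1})`. -/
theorem stmt1 (k : Type*) [Field k] (n : ℕ) (hn : 2 ≤ n)
    (x : Fin (n - 1) → FractionRing (MvPolynomial (Fin (n - 1)) k))
    (hx : ∀ i, x i = algebraMap (MvPolynomial (Fin (n - 1)) k)
      (FractionRing (MvPolynomial (Fin (n - 1)) k)) (MvPolynomial.X i))
    (σ : FractionRing (MvPolynomial (Fin (n - 1)) k) ≃ₐ[k]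
         FractionRing (MvPolynomial (Fin (n - 1)) k))
    (hσ : ∀ i j : Fin (n - 1), (j : ℕ) = (i : ℕ) + 1 → σ (x i) = x j)
    (hσlast : ∀ i : Fin (n - 1), (i : ℕ) = n - 2 → σ (x i) = (∏ j, x j)⁻¹) :
    ∃ y : Fin (n - 1) → FractionRing (MvPolynomial (Fin (n - 1)) k),
      IntermediateField.adjoin k (Set.range y) = ⊤ ∧
      (∀ i j : Fin (n - 1), (j : ℕ) = (i : ℕ) + 1 → σ (y i) = y j) ∧
      (∀ i : Fin (n - 1), (i : ℕ) = n - 2 → σ (y i) = 1 - ∑ j, y j) := by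
  have : NeZero (n - 1) := ⟨by omega⟩
  have hshift : IsHajjaShift σ x := ⟨hσ, fun i hi => hσlast i (by omega)⟩
  have hxX : x = algebraMap _ _ ∘ X := funext hx
  have hinj := IsFractionRing.injective (MvPolynomial (Fin (n - 1)) k)
    (FractionRing (MvPolynomial (Fin (n - 1)) k))
  have hx_ne (i : Fin (n - 1)) : x i ≠ 0 := by
    rw [hx]; exact (map_ne_zero_iff _ hinj).mpr (X_ne_zero i)
  have hS : partialProdSum x ≠ 0 := by
    rw [hxX, ← map_partialProdSum]; exact (map_ne_zero_iff _ hinj).mpr partialProdSum_X_ne_zero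
  refine ⟨hajjaBasis x, ?_, fun i j hij => hshift.map_hajjaBasis_of_val_eq_succ hx_ne hij,
    fun i hi => hshift.map_hajjaBasis_of_val_eq_last hx_ne hS (by omega)⟩
  rw [adjoin_range_hajjaBasis k hx_ne hS, hxX]
  exact adjoin_range_algebraMap_X_eq_top k (Fin (n - 1))
end

section
/- Let p be an odd prime, k a field of characteristic p, and σ the k-automorphism of k(y₁,…,y_{p-1}) defined by σ(y_i) = y_{i+1} for 1 ≤ i ≤ p−2 and σ(y_{p-1}) = 1 − Σ_{i=1}^{p-1} y_i. Set u := Σ_{i=1}^{p-1} (p−i) y_i. Then σ(u) = u + 1. -/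
set_option maxHeartbeats 1000000
set_option synthInstance.maxHeartbeats 400000

lemma stmt3_aux {L : Type*} [CommRing L] {p n : ℕ} (hp : 2 ≤ p) (hn : n = p - 1)
    (hchar : (p : L) = 0)
    (y : Fin n → L) (σ : L →+* L)
    (hσ : ∀ i j : Fin n, (j : ℕ) = (i : ℕ) + 1 → σ (y i) = y j)
    (hσlast : ∀ i : Fin n, (i : ℕ) = p - 2 → σ (y i) = 1 - ∑ j, y j) :
    σ (∑ i : Fin n, ((p - ((i : ℕ) + 1) : ℕ) : L) * y i)
      = ∑ i : Fin n, ((p - ((i : ℕ) + 1) : ℕ) : L) * y i + 1 := by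
  obtain ⟨m, rfl⟩ : ∃ m, n = m + 1 := ⟨p - 2, by omega⟩
  have hmp : m = p - 2 := by omega
  rw [map_sum]
  have hstep : ∀ i : Fin m, σ (y i.castSucc) = y i.succ := fun i =>
    hσ i.castSucc i.succ (by simp)
  have hlast : σ (y (Fin.last m)) = 1 - ∑ j, y j :=
    hσlast (Fin.last m) (by simpa using hmp)
  rw [Fin.sum_univ_castSucc (f := fun i => σ (((p - ((i : ℕ) + 1) : ℕ) : L) * y i))]
  rw [Fin.sum_univ_castSucc (f := fun i : Fin (m+1) => ((p - ((i : ℕ) + 1) : ℕ) : L) * y i)]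
  have hcl : ((p - ((Fin.last m : ℕ) + 1) : ℕ) : L) = ((p - ((Fin.last m : ℕ) + 1) : ℕ) : L) := rfl
  have hml : ((Fin.last m : ℕ) + 1) = m + 1 := by simp
  have hc1 : (p - (m + 1)) = 1 := by omega
  calc (∑ i : Fin m, σ (((p - ((i.castSucc : ℕ) + 1) : ℕ) : L) * y i.castSucc))
        + σ (((p - ((Fin.last m : ℕ) + 1) : ℕ) : L) * y (Fin.last m))
      = (∑ i : Fin m, ((p - ((i : ℕ) + 1) : ℕ) : L) * y i.succ)
        + (1 - ∑ j, y j) := by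
        rw [map_mul, map_natCast, hlast, hml, hc1]
        simp only [map_mul, map_natCast, Fin.coe_castSucc]
        congr 1
        · exact Finset.sum_congr rfl fun i _ => by rw [hstep]
        · rw [Nat.cast_one, one_mul]
    _ = (∑ i : Fin m, (((p - (((i : ℕ) + 1) + 1) : ℕ) : L) + 1) * y i.succ)
        + (1 - ∑ j, y j) := by
        congr 1
        refine Finset.sum_congr rfl fun i _ => ?_
        congr 1
        have h2 : (i : ℕ) + 2 ≤ p := by have := i.isLt; omega
        have : p - ((i : ℕ) + 1) = (p - (((i : ℕ) + 1) + 1)) + 1 := by omega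
        rw [this, Nat.cast_add, Nat.cast_one]
    _ = ∑ i : Fin m, ((p - ((i.castSucc : ℕ) + 1) : ℕ) : L) * y i.castSucc
        + ((p - ((Fin.last m : ℕ) + 1) : ℕ) : L) * y (Fin.last m) + 1 := by
        rw [hml, hc1]
        have hs := Fin.sum_univ_succ y
        have hU := Fin.sum_univ_succ (f := fun j : Fin (m+1) => ((p - ((j : ℕ) + 1) : ℕ) : L) * y j)
        have hUc := Fin.sum_univ_castSucc (f := fun j : Fin (m+1) => ((p - ((j : ℕ) + 1) : ℕ) : L) * y j)
        simp only [Fin.val_succ, Fin.val_zero, Fin.coe_castSucc, Fin.val_last, zero_add,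
          Nat.cast_one, one_mul, add_mul, Finset.sum_add_distrib] at hU hUc ⊢
        rw [hc1] at hUc
        have hp1 : ((p - 1 : ℕ) : L) = -1 := by
          rw [Nat.cast_sub (by omega), hchar]; ring
        rw [Nat.cast_one] at hUc
        linear_combination (-1 : L) * hU + hUc - hs - y 0 * hp1
    _ = _ := rfl

/-- with `char k = p`, `σ : y₁ ↦ y₂ ↦ ⋯ ↦ y_{p-1} ↦ 1 - Σ y_i` and
`u := Σ_{i=1}^{p-1} (p - i) y_i`, one has `σ(u) = u + 1`. -/
theorem stmt3 (k : Type*) [Field k] (p : ℕ) (hp : p.Prime) (hodd : Odd p) [CharP k p]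
    (y : Fin (p - 1) → FractionRing (MvPolynomial (Fin (p - 1)) k))
    (hy : ∀ i, y i = algebraMap (MvPolynomial (Fin (p - 1)) k)
      (FractionRing (MvPolynomial (Fin (p - 1)) k)) (MvPolynomial.X i))
    (σ : FractionRing (MvPolynomial (Fin (p - 1)) k) ≃ₐ[k]
         FractionRing (MvPolynomial (Fin (p - 1)) k))
    (hσ : ∀ i j : Fin (p - 1), (j : ℕ) = (i : ℕ) + 1 → σ (y i) = y j)
    (hσlast : ∀ i : Fin (p - 1), (i : ℕ) = p - 2 → σ (y i) = 1 - ∑ j, y j)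
    (u : FractionRing (MvPolynomial (Fin (p - 1)) k))
    (hu : u = ∑ i : Fin (p - 1), ((p - ((i : ℕ) + 1) : ℕ) :
      FractionRing (MvPolynomial (Fin (p - 1)) k)) * y i) :
    σ u = u + 1 := by
  subst hu
  have hchar : ((p : ℕ) : FractionRing (MvPolynomial (Fin (p - 1)) k)) = 0 := by
    haveI : CharP (FractionRing (MvPolynomial (Fin (p - 1)) k)) p :=
      charP_of_injective_algebraMap
        (algebraMap k (FractionRing (MvPolynomial (Fin (p - 1)) k))).injective p
    exact CharP.cast_eq_zero _ p
  exact stmt3_aux hp.two_le rfl hchar y (σ : _ →+* _) hσ hσlast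
end

section
/- Let p be an odd prime, k a field of characteristic p, and σ the k-automorphism of k(u₀, u₁) (u₀, u₁ algebraically independent) given by σ(u₀) = u₀ and σ(u₁) = u₁ − u₀. Set w := u₁/u₀ and W := ∏_{i=0}^{p-1} (w + i). Then σ has order p, σ(W) = W, and k(u₀, u₁)^⟨σ⟩ = k(u₀, W). -/
set_option maxHeartbeats 1000000
set_option synthInstance.maxHeartbeats 400000

/-- in characteristic `p`, for the automorphism
`σ : u₀ ↦ u₀, u₁ ↦ u₁ - u₀` of `k(u₀,u₁)`, with `w := u₁/u₀` and
`W := ∏_{i=0}^{p-1}(w + i)`, `σ` has order `p`, fixes `W`, and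
`k(u₀,u₁)^⟨σ⟩ = k(u₀, W)`. -/
theorem stmt12 (k : Type*) [Field k] (p : ℕ) (hp : p.Prime) (hodd : Odd p) [CharP k p]
    (u₀ u₁ : FractionRing (MvPolynomial (Fin 2) k))
    (hu₀ : u₀ = algebraMap (MvPolynomial (Fin 2) k)
      (FractionRing (MvPolynomial (Fin 2) k)) (MvPolynomial.X 0))
    (hu₁ : u₁ = algebraMap (MvPolynomial (Fin 2) k)
      (FractionRing (MvPolynomial (Fin 2) k)) (MvPolynomial.X 1))
    (σ : FractionRing (MvPolynomial (Fin 2) k) ≃ₐ[k]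
         FractionRing (MvPolynomial (Fin 2) k))
    (hσ₀ : σ u₀ = u₀) (hσ₁ : σ u₁ = u₁ - u₀)
    (W : FractionRing (MvPolynomial (Fin 2) k))
    (hW : W = ∏ i ∈ Finset.range p, (u₁ / u₀ + (i : FractionRing (MvPolynomial (Fin 2) k)))) :
    orderOf σ = p ∧ σ W = W ∧
      IntermediateField.fixedField (Subgroup.zpowers σ) =
        IntermediateField.adjoin k {u₀, W} := by
  open IntermediateField Module in
  haveI := Fact.mk hp
  haveI : CharP (FractionRing (MvPolynomial (Fin 2) k)) p :=
    charP_of_injective_algebraMap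
      (algebraMap k (FractionRing (MvPolynomial (Fin 2) k))).injective p
  -- u₀ is nonzero
  have hu₀ne : u₀ ≠ 0 := by
    rw [hu₀]
    simp only [ne_eq, map_eq_zero_iff _
      (IsFractionRing.injective (MvPolynomial (Fin 2) k) (FractionRing (MvPolynomial (Fin 2) k)))]
    exact MvPolynomial.X_ne_zero 0
  -- the whole field is generated by u₀ and u₁
  have hadj : IntermediateField.adjoin k {u₀, u₁} = ⊤ := by
    rw [eq_top_iff]
    have halg : ∀ q : MvPolynomial (Fin 2) k,
        algebraMap (MvPolynomial (Fin 2) k) (FractionRing (MvPolynomial (Fin 2) k)) q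
          ∈ IntermediateField.adjoin k {u₀, u₁} := by
      intro q
      induction q using MvPolynomial.induction_on with
      | C a => exact (IntermediateField.adjoin k {u₀, u₁}).algebraMap_mem a
      | add f g hf hg => rw [map_add]; exact add_mem hf hg
      | mul_X f i hf =>
        rw [map_mul]
        refine mul_mem hf (IntermediateField.subset_adjoin _ _ ?_)
        fin_cases i
        · exact Or.inl hu₀.symm
        · exact Or.inr hu₁.symm
    intro x _
    obtain ⟨a, b, hb, rfl⟩ := IsFractionRing.div_surjective (A := MvPolynomial (Fin 2) k) x
    exact div_mem (halg a) (halg b)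
  -- any automorphism fixing u₀ and u₁ is the identity
  have hext : ∀ τ : FractionRing (MvPolynomial (Fin 2) k) ≃ₐ[k]
      FractionRing (MvPolynomial (Fin 2) k), τ u₀ = u₀ → τ u₁ = u₁ → τ = 1 := by
    intro τ h0 h1
    have key : ∀ x, x ∈ IntermediateField.adjoin k {u₀, u₁} → τ x = x := by
      intro x hx
      induction hx using IntermediateField.adjoin_induction with
      | mem x hx => rcases hx with rfl | rfl; exacts [h0, h1]
      | algebraMap x => exact τ.commutes x
      | add x y _ _ hx hy => rw [map_add, hx, hy]
      | inv x _ hx => rw [map_inv₀, hx]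
      | mul x y _ _ hx hy => rw [map_mul, hx, hy]
    ext x
    exact key x (hadj ▸ IntermediateField.mem_top)
  -- order of σ is p
  have hpow : ∀ n : ℕ, (σ ^ n) u₀ = u₀ ∧
      (σ ^ n) u₁ = u₁ - (n : FractionRing (MvPolynomial (Fin 2) k)) * u₀ := by
    intro n
    induction n with
    | zero => simp
    | succ n ih =>
      rw [pow_succ, AlgEquiv.mul_apply, AlgEquiv.mul_apply, hσ₀, hσ₁, map_sub, ih.1, ih.2]
      refine ⟨rfl, by push_cast; ring⟩
  have hσp : σ ^ p = 1 := by
    refine hext _ (hpow p).1 ?_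
    rw [(hpow p).2, CharP.cast_eq_zero (FractionRing (MvPolynomial (Fin 2) k)) p, zero_mul, sub_zero]
  have hσne : σ ≠ 1 := by
    intro h
    rw [h, AlgEquiv.one_apply] at hσ₁
    exact hu₀ne (by linear_combination hσ₁)
  have horder : orderOf σ = p := orderOf_eq_prime hσp hσne
  -- σ fixes W
  have hσw : σ (u₁ / u₀) = u₁ / u₀ - 1 := by
    rw [map_div₀, hσ₁, hσ₀, sub_div, div_self hu₀ne]
  have hσW : σ W = W := by
    obtain ⟨m, hm⟩ : ∃ m, p = m + 1 := ⟨p - 1, (Nat.succ_pred_eq_of_pos hp.pos).symm⟩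
    have hmK : (m : FractionRing (MvPolynomial (Fin 2) k)) = -1 := by
      have h : ((m : FractionRing (MvPolynomial (Fin 2) k)) + 1)
          = (p : FractionRing (MvPolynomial (Fin 2) k)) := by rw [hm]; push_cast; ring
      rw [CharP.cast_eq_zero (FractionRing (MvPolynomial (Fin 2) k)) p] at h
      linear_combination h
    rw [hW, map_prod]
    have hterm : ∀ i ∈ Finset.range p,
        σ (u₁ / u₀ + (i : FractionRing (MvPolynomial (Fin 2) k)))
          = u₁ / u₀ - 1 + (i : FractionRing (MvPolynomial (Fin 2) k)) := by
      intro i _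
      rw [map_add, hσw, map_natCast]
    rw [Finset.prod_congr rfl hterm, hm, Finset.prod_range_succ', Finset.prod_range_succ]
    have h1 : ∀ i : ℕ, u₁ / u₀ - 1 + ((i : ℕ) + 1 : ℕ)
        = u₁ / u₀ + (i : FractionRing (MvPolynomial (Fin 2) k)) := by
      intro i; push_cast; ring
    rw [Finset.prod_congr rfl fun i _ => h1 i]
    rw [Nat.cast_zero, add_zero, hmK]
    ring
  refine ⟨horder, hσW, ?_⟩
  -- the fixed field computation
  have hle : IntermediateField.adjoin k {u₀, W} ≤
      IntermediateField.fixedField (Subgroup.zpowers σ) := by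
    rw [IntermediateField.adjoin_le_iff]
    have hfix : ∀ x : FractionRing (MvPolynomial (Fin 2) k), σ x = x →
        x ∈ IntermediateField.fixedField (Subgroup.zpowers σ) := by
      intro x hx g
      have hg : (g : FractionRing (MvPolynomial (Fin 2) k) ≃ₐ[k]
            FractionRing (MvPolynomial (Fin 2) k)) ∈
          MulAction.stabilizer (FractionRing (MvPolynomial (Fin 2) k) ≃ₐ[k]
            FractionRing (MvPolynomial (Fin 2) k)) x :=
        Subgroup.zpowers_le.mpr (show σ ∈ MulAction.stabilizer _ x from hx) g.2
      exact hg
    rintro x (rfl | rfl)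
    · exact hfix _ hσ₀
    · exact hfix _ hσW
  have hfin : IsOfFinOrder σ := by
    rw [← orderOf_pos_iff, horder]; exact hp.pos
  haveI : Finite (Subgroup.zpowers σ) := hfin.finite_zpowers
  haveI : Fintype (Subgroup.zpowers σ) := Fintype.ofFinite _
  haveI : FaithfulSMul (Subgroup.zpowers σ) (FractionRing (MvPolynomial (Fin 2) k)) :=
    ⟨fun h => Subtype.ext (AlgEquiv.ext h)⟩
  have hcard : Fintype.card (Subgroup.zpowers σ) = p := by
    rw [← Nat.card_eq_fintype_card, Nat.card_zpowers, horder]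
  have hEfinrank : finrank (IntermediateField.fixedField (Subgroup.zpowers σ))
      (FractionRing (MvPolynomial (Fin 2) k)) = p := by
    rw [← hcard]
    exact FixedPoints.finrank_eq_card (Subgroup.zpowers σ) (FractionRing (MvPolynomial (Fin 2) k))
  -- now bound [K : k(u₀, W)]
  set F := IntermediateField.adjoin k {u₀, W} with hF
  set w := u₁ / u₀ with hw
  have hWmem : W ∈ F := IntermediateField.subset_adjoin _ _ (Set.mem_insert_of_mem _ rfl)
  have hu₀mem : u₀ ∈ F := IntermediateField.subset_adjoin _ _ (Set.mem_insert _ _)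
  set q : Polynomial F :=
    (∏ i ∈ Finset.range p, (Polynomial.X + Polynomial.C (i : F))) - Polynomial.C ⟨W, hWmem⟩
    with hq
  have hmonicprod : (∏ i ∈ Finset.range p, (Polynomial.X + Polynomial.C (i : F))).Monic :=
    Polynomial.monic_prod_of_monic _ _ fun i _ => Polynomial.monic_X_add_C _
  have hdegprod : (∏ i ∈ Finset.range p, (Polynomial.X + Polynomial.C (i : F))).natDegree = p := by
    rw [Polynomial.natDegree_prod _ _ fun i _ => (Polynomial.monic_X_add_C _).ne_zero,
      Finset.sum_congr rfl fun i _ => Polynomial.natDegree_X_add_C ((i : ℕ) : F)]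
    simp
  have hqmonic : q.Monic := by
    rw [hq, sub_eq_add_neg]
    refine hmonicprod.add_of_left ?_
    rw [Polynomial.degree_neg]
    calc (Polynomial.C (⟨W, hWmem⟩ : F)).degree ≤ 0 := Polynomial.degree_C_le
    _ < p := by exact_mod_cast Nat.cast_pos.mpr hp.pos
    _ = _ := by rw [Polynomial.degree_eq_natDegree hmonicprod.ne_zero, hdegprod]
  have hqdeg : q.natDegree = p := by
    rw [hq, Polynomial.natDegree_sub_C, hdegprod]
  have haeval : Polynomial.aeval w q = 0 := by
    rw [hq, map_sub, Polynomial.aeval_C, map_prod]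
    simp only [map_add, Polynomial.aeval_X, Polynomial.aeval_C]
    have hcast : ∀ i : ℕ, algebraMap F (FractionRing (MvPolynomial (Fin 2) k)) (i : F) = (i : FractionRing (MvPolynomial (Fin 2) k)) := fun i => map_natCast _ i
    rw [Finset.prod_congr rfl fun i _ => by rw [hcast i], ← hW]
    show W - algebraMap F (FractionRing (MvPolynomial (Fin 2) k)) ⟨W, hWmem⟩ = 0
    rw [IntermediateField.algebraMap_apply]
    simp
  have hwint : IsIntegral F w := ⟨q, hqmonic, by rwa [← Polynomial.aeval_def]⟩
  have htop : F⟮w⟯ = ⊤ := by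
    apply IntermediateField.restrictScalars_injective k
    rw [IntermediateField.restrictScalars_top, eq_top_iff, ← hadj,
      IntermediateField.adjoin_le_iff]
    have h0 : u₀ ∈ IntermediateField.restrictScalars k F⟮w⟯ :=
      (IntermediateField.restrictScalars_adjoin (F := k) F ({w} : Set (FractionRing (MvPolynomial (Fin 2) k))) ▸
        IntermediateField.subset_adjoin _ _ (Set.mem_union_left _ hu₀mem) : _)
    have hwmem : w ∈ IntermediateField.restrictScalars k F⟮w⟯ :=
      (IntermediateField.restrictScalars_adjoin (F := k) F ({w} : Set (FractionRing (MvPolynomial (Fin 2) k))) ▸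
        IntermediateField.subset_adjoin _ _ (Set.mem_union_right _ rfl) : _)
    rintro x (rfl | rfl)
    · exact h0
    · have hmul := mul_mem hwmem h0
      rwa [hw, div_mul_cancel₀ _ hu₀ne] at hmul
  haveI hFD : FiniteDimensional F (FractionRing (MvPolynomial (Fin 2) k)) := by
    have h1 : FiniteDimensional F F⟮w⟯ := IntermediateField.adjoin.finiteDimensional hwint
    rw [htop] at h1
    exact (IntermediateField.topEquiv (F := F) (E := FractionRing (MvPolynomial (Fin 2) k))).toLinearEquiv.finiteDimensional
  have hfrle : finrank F (FractionRing (MvPolynomial (Fin 2) k)) ≤ p := by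
    have h1 : finrank F F⟮w⟯ = (minpoly F w).natDegree := IntermediateField.adjoin.finrank hwint
    have h2 : (minpoly F w).natDegree ≤ p := by
      rw [← hqdeg]
      exact Polynomial.natDegree_le_of_dvd (minpoly.dvd F w haeval) hqmonic.ne_zero
    have h3 : finrank F (FractionRing (MvPolynomial (Fin 2) k)) = finrank F F⟮w⟯ := by
      rw [htop]
      exact ((IntermediateField.topEquiv (F := F) (E := FractionRing (MvPolynomial (Fin 2) k))).toLinearEquiv.finrank_eq).symm
    rw [h3, h1]; exact h2
  exact (IntermediateField.eq_of_le_of_finrank_le' hle (by rw [hEfinrank]; exact hfrle)).symm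
end
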